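/- Let p : E → B be a fibration with the weakly unique path homotopically lifting property (wuphl) such that every fiber p⁻¹(b) is path connected. Then for every e₀ ∈ E, the induced homomorphism p₊ : π₁(E, e₀) → π₁(B, p(e₀)) is an isomorphism (i.e., bijective). -/

import Mathlib

universe u

open scoped unitInterval

/-- `p` has the weakly unique path homotopically lifting property (wuphl). -/
def Wuphl {E B : Type*} [TopologicalSpace E] [TopologicalSpace B] (p : C(E, B)) : Prop :=
  ∀ α β : C(unitInterval, E), α 0 = β 0 → α 1 = β 1 →
    (p.comp α).HomotopicRel (p.comp β) {0, 1} →
    α.HomotopicRel β {0, 1}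

/-- `p` is a (Hurewicz) fibration: it has the homotopy lifting property with respect to
every topological space. -/
def IsFibration {E B : Type*} [TopologicalSpace E] [TopologicalSpace B] (p : C(E, B)) : Prop :=
  ∀ (X : Type u) [TopologicalSpace X] (f : C(X, E)) (F : C(X × unitInterval, B)),
    (∀ x, F (x, 0) = p (f x)) →
    ∃ F' : C(X × unitInterval, E), (∀ z, p (F' z) = F z) ∧ (∀ x, F' (x, 0) = f x)

/-- The homomorphism induced by a continuous map `p` on fundamental groups. -/
noncomputable def inducedPi1Hom {E B : Type u} [TopologicalSpace E] [TopologicalSpace B]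
    (p : C(E, B)) (e : E) :
    FundamentalGroup E e →* FundamentalGroup B (p e) :=
  CategoryTheory.Functor.mapEnd (FundamentalGroupoid.mk e)
    (FundamentalGroupoid.fundamentalGroupoidFunctor.map
      (X := TopCat.of E) (Y := TopCat.of B) (TopCat.ofHom p))

/-! Injectivity of `p₊` is the wuphl property read on homotopy classes. For surjectivity, lift a
loop `γ` at `p e₀` to a path from `e₀`; it ends in the fibre over `p e₀`, so a path inside that
fibre closes it up to a loop at `e₀` whose image is `γ` followed by a constant path. -/

section
variable {E B : Type*} [TopologicalSpace E] [TopologicalSpace B] {p : C(E, B)}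

theorem Wuphl.homotopic_of_homotopic_map (hw : Wuphl p) {x y : E} {α β : Path x y}
    (h : (α.map p.continuous).Homotopic (β.map p.continuous)) : α.Homotopic β :=
  hw α β (by simp) (by simp) h

theorem Wuphl.injective_quotient_map (hw : Wuphl p) (x y : E) :
    Function.Injective fun γ : Path.Homotopic.Quotient x y => γ.map p := by
  rintro ⟨α⟩ ⟨β⟩ h
  exact Path.Homotopic.Quotient.eq.mpr
    (hw.homotopic_of_homotopic_map (Path.Homotopic.Quotient.eq.mp h))

theorem IsFibration.exists_path_lift (hp : IsFibration p) {e : E} {b : B}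
    (γ : Path (p e) b) : ∃ (e' : E) (Γ : Path e e'), ∀ t, p (Γ t) = γ t := by
  obtain ⟨F, hFp, hF0⟩ := hp PUnit (.const _ e) ⟨fun z => γ z.2, by fun_prop⟩ (by simp)
  exact ⟨_, ⟨⟨fun t => F (.unit, t), by fun_prop⟩, hF0 .unit, rfl⟩, fun t => hFp (.unit, t)⟩

theorem IsFibration.surjective_quotient_map (hp : IsFibration p)
    (hfib : ∀ b : B, IsPathConnected (p ⁻¹' {b})) (x y : E) :
    Function.Surjective fun γ : Path.Homotopic.Quotient x y => γ.map p := by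
  rintro ⟨γ⟩
  obtain ⟨e', Γ, hΓ⟩ := hp.exists_path_lift γ
  have he' : p e' = p y := by simpa using hΓ 1
  obtain ⟨δ, hδ⟩ := (hfib (p y)).joinedIn e' he' y rfl
  have hmap : (Γ.trans δ).map p.continuous = γ.trans (.refl (p y)) := by
    ext t
    simp only [Path.map_coe, Path.trans_apply, Function.comp_apply, Path.refl_apply]
    split_ifs
    exacts [hΓ _, hδ _]
  have hhom : ((Γ.trans δ).map p.continuous).Homotopic γ := hmap ▸ ⟨.transRefl γ⟩
  exact ⟨.mk (Γ.trans δ), Path.Homotopic.Quotient.eq.mpr hhom⟩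

end

theorem fibration_wuphl_pathConnected_fibers_pi1_iso {E B : Type u} [TopologicalSpace E]
    [TopologicalSpace B] (p : C(E, B)) (hp : IsFibration p) (hw : Wuphl p)
    (hfib : ∀ b : B, IsPathConnected (⇑p ⁻¹' {b})) :
    ∀ e₀ : E, Function.Bijective (inducedPi1Hom p e₀) := fun e₀ =>
  -- `inducedPi1Hom p e₀` unfolds to `fun γ => γ.map p` on `Path.Homotopic.Quotient e₀ e₀`.
  ⟨hw.injective_quotient_map e₀ e₀, hp.surjective_quotient_map hfib e₀ e₀⟩
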